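/- Let 𝒜 ⊆ ℝᵐ be a nonempty set of actions contained in the closed ball of radius a_max centered at the origin, let A, Â be n×n real matrices and B, B̂ be n×m real matrices, let W ∈ ℕ, let x₁, …, x_W ∈ ℝⁿ be states with ‖x_t‖₂ ≤ s_max for all t, and let y₂, …, y_{W+1} ∈ ℝⁿ be target points. Suppose for each t the online action â_t ∈ 𝒜 minimizes the model-predicted cost a ↦ ‖Â x_t + B̂ a − y_{t+1}‖₂ over 𝒜. Then for any comparator action sequence a⋆₁, …, a⋆_W in 𝒜, the cumulative true tracking cost satisfies ∑_{t=1}^{W} ‖A x_t + B â_t − y_{t+1}‖₂ ≤ ∑_{t=1}^{W} ‖A x_t + B a⋆_t − y_{t+1}‖₂ + 2W·(σ₁(A − Â)·s_max + σ₁(B − B̂)·a_max); i.e., the regret of planning with the approximate dynamics grows at most linearly in the horizon W and in the largest singular values of the system-matrix errors. -/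

import Mathlib

/-! Planning with a model `g` that is uniformly `ε`-close to the true cost `f` on the feasible
set loses at most `ε` when the model's minimiser is evaluated under `f`, and at most another `ε`
when the model value of the comparator is converted back to its true value. For the linear
dynamics the model error is `(A - Â) x + (B - B̂) a`, of norm at most
`σ₁(A - Â) s_max + σ₁(B - B̂) a_max`; summing the per-step regret `2ε` over the horizon
gives the bound. -/

/-- The largest singular value of a real matrix, i.e. the ℓ²-operator norm of the
induced linear map between Euclidean spaces. -/
noncomputable def sigma1 {n m : ℕ} (M : Matrix (Fin n) (Fin m) ℝ) : ℝ :=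
  ‖LinearMap.toContinuousLinearMap (Matrix.toEuclideanLin M)‖

theorem sigma1_nonneg {n m : ℕ} (M : Matrix (Fin n) (Fin m) ℝ) : 0 ≤ sigma1 M :=
  norm_nonneg _

theorem norm_toEuclideanLin_le {n m : ℕ} (M : Matrix (Fin n) (Fin m) ℝ)
    (v : EuclideanSpace ℝ (Fin m)) : ‖Matrix.toEuclideanLin M v‖ ≤ sigma1 M * ‖v‖ :=
  (LinearMap.toContinuousLinearMap (Matrix.toEuclideanLin M)).le_opNorm v

theorem IsMinOn.norm_le_norm_add_two_mul {α E : Type*} [SeminormedAddCommGroup E]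
    {f g : α → E} {S : Set α} {ε : ℝ} {a₀ a : α}
    (hmin : IsMinOn (fun b => ‖g b‖) S a₀) (hfg : ∀ b ∈ S, ‖f b - g b‖ ≤ ε)
    (ha₀ : a₀ ∈ S) (ha : a ∈ S) :
    ‖f a₀‖ ≤ ‖f a‖ + 2 * ε := by
  have hg : ‖g a₀‖ ≤ ‖g a‖ := isMinOn_iff.mp hmin a ha
  have h₀ := abs_le.mp ((abs_norm_sub_norm_le (f a₀) (g a₀)).trans (hfg a₀ ha₀))
  have h₁ := abs_le.mp ((abs_norm_sub_norm_le (f a) (g a)).trans (hfg a ha))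
  linarith [h₀.2, h₁.1]

theorem norm_linear_model_error_le {n m : ℕ}
    (A Ahat : Matrix (Fin n) (Fin n) ℝ) (B Bhat : Matrix (Fin n) (Fin m) ℝ)
    (x y : EuclideanSpace ℝ (Fin n)) (a : EuclideanSpace ℝ (Fin m)) :
    ‖(Matrix.toEuclideanLin A x + Matrix.toEuclideanLin B a - y)
        - (Matrix.toEuclideanLin Ahat x + Matrix.toEuclideanLin Bhat a - y)‖
      ≤ sigma1 (A - Ahat) * ‖x‖ + sigma1 (B - Bhat) * ‖a‖ := by
  have hdiff : (Matrix.toEuclideanLin A x + Matrix.toEuclideanLin B a - y)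
        - (Matrix.toEuclideanLin Ahat x + Matrix.toEuclideanLin Bhat a - y)
      = Matrix.toEuclideanLin (A - Ahat) x + Matrix.toEuclideanLin (B - Bhat) a := by
    simp only [map_sub, LinearMap.sub_apply]
    abel
  rw [hdiff]
  exact (norm_add_le _ _).trans
    (add_le_add (norm_toEuclideanLin_le _ _) (norm_toEuclideanLin_le _ _))

theorem regret_linear_in_horizon_general {n m : ℕ}
    (𝒜 : Set (EuclideanSpace ℝ (Fin m)))
    (a_max : ℝ) (h𝒜bdd : 𝒜 ⊆ Metric.closedBall 0 a_max)
    (A Ahat : Matrix (Fin n) (Fin n) ℝ) (B Bhat : Matrix (Fin n) (Fin m) ℝ)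
    (W : ℕ)
    (x : Fin W → EuclideanSpace ℝ (Fin n)) (s_max : ℝ)
    (hx : ∀ t, ‖x t‖ ≤ s_max)
    (y : Fin W → EuclideanSpace ℝ (Fin n))
    (ahat : Fin W → EuclideanSpace ℝ (Fin m)) (hahat : ∀ t, ahat t ∈ 𝒜)
    (hmin : ∀ t, ∀ a ∈ 𝒜,
      ‖Matrix.toEuclideanLin Ahat (x t) + Matrix.toEuclideanLin Bhat (ahat t) - y t‖
        ≤ ‖Matrix.toEuclideanLin Ahat (x t) + Matrix.toEuclideanLin Bhat a - y t‖)
    (astar : Fin W → EuclideanSpace ℝ (Fin m)) (hastar : ∀ t, astar t ∈ 𝒜) :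
    ∑ t : Fin W, ‖Matrix.toEuclideanLin A (x t) + Matrix.toEuclideanLin B (ahat t) - y t‖
      ≤ (∑ t : Fin W,
          ‖Matrix.toEuclideanLin A (x t) + Matrix.toEuclideanLin B (astar t) - y t‖)
        + 2 * W * (sigma1 (A - Ahat) * s_max + sigma1 (B - Bhat) * a_max) := by
  let ε := sigma1 (A - Ahat) * s_max + sigma1 (B - Bhat) * a_max
  have hmodel : ∀ t, ∀ a ∈ 𝒜,
      ‖(Matrix.toEuclideanLin A (x t) + Matrix.toEuclideanLin B a - y t)
        - (Matrix.toEuclideanLin Ahat (x t) + Matrix.toEuclideanLin Bhat a - y t)‖ ≤ ε :=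
    fun t a ha => (norm_linear_model_error_le A Ahat B Bhat (x t) (y t) a).trans <|
      add_le_add (mul_le_mul_of_nonneg_left (hx t) (sigma1_nonneg _))
        (mul_le_mul_of_nonneg_left (mem_closedBall_zero_iff.mp (h𝒜bdd ha)) (sigma1_nonneg _))
  have hstep : ∀ t,
      ‖Matrix.toEuclideanLin A (x t) + Matrix.toEuclideanLin B (ahat t) - y t‖
        ≤ ‖Matrix.toEuclideanLin A (x t) + Matrix.toEuclideanLin B (astar t) - y t‖ + 2 * ε :=
    fun t => IsMinOn.norm_le_norm_add_two_mul
      (f := fun a => Matrix.toEuclideanLin A (x t) + Matrix.toEuclideanLin B a - y t)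
      (g := fun a => Matrix.toEuclideanLin Ahat (x t) + Matrix.toEuclideanLin Bhat a - y t)
      (isMinOn_iff.mpr (hmin t)) (hmodel t) (hahat t) (hastar t)
  calc _ ≤ ∑ t : Fin W,
        (‖Matrix.toEuclideanLin A (x t) + Matrix.toEuclideanLin B (astar t) - y t‖ + 2 * ε) :=
        Finset.sum_le_sum fun t _ => hstep t
    _ = _ := by
        rw [Finset.sum_add_distrib, Finset.sum_const, Finset.card_univ, Fintype.card_fin,
          nsmul_eq_mul]
        ring

theorem regret_linear_in_horizon {n m : ℕ}
    (𝒜 : Set (EuclideanSpace ℝ (Fin m))) (h𝒜 : 𝒜.Nonempty)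
    (a_max : ℝ) (h𝒜bdd : 𝒜 ⊆ Metric.closedBall 0 a_max)
    (A Ahat : Matrix (Fin n) (Fin n) ℝ) (B Bhat : Matrix (Fin n) (Fin m) ℝ)
    (W : ℕ)
    (x : Fin W → EuclideanSpace ℝ (Fin n)) (s_max : ℝ)
    (hx : ∀ t, ‖x t‖ ≤ s_max)
    (y : Fin W → EuclideanSpace ℝ (Fin n))
    (ahat : Fin W → EuclideanSpace ℝ (Fin m)) (hahat : ∀ t, ahat t ∈ 𝒜)
    (hmin : ∀ t, ∀ a ∈ 𝒜,
      ‖Matrix.toEuclideanLin Ahat (x t) + Matrix.toEuclideanLin Bhat (ahat t) - y t‖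
        ≤ ‖Matrix.toEuclideanLin Ahat (x t) + Matrix.toEuclideanLin Bhat a - y t‖)
    (astar : Fin W → EuclideanSpace ℝ (Fin m)) (hastar : ∀ t, astar t ∈ 𝒜) :
    ∑ t : Fin W, ‖Matrix.toEuclideanLin A (x t) + Matrix.toEuclideanLin B (ahat t) - y t‖
      ≤ (∑ t : Fin W,
          ‖Matrix.toEuclideanLin A (x t) + Matrix.toEuclideanLin B (astar t) - y t‖)
        + 2 * W * (sigma1 (A - Ahat) * s_max + sigma1 (B - Bhat) * a_max) :=
  regret_linear_in_horizon_general 𝒜 a_max h𝒜bdd A Ahat B Bhat W x s_max hx y ahat hahat hmin astar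
    hastar
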